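/- arXiv:2305.04746 — 2 statements merged into one kernel-verified Lean document; each statement's English description precedes it below -/
import Mathlib

section
/- Let p be a nice probability density on ℝ^d (spherically symmetric and nonincreasing in argument norm), and define Φ(r, x) = ∫_{B(x,r)} p(t) dt, the mass of p in the ball of radius r centered at x. Then Φ is nonincreasing in the norm of x: if ‖x₁‖₂ ≥ ‖x₂‖₂ then Φ(r, x₁) ≤ Φ(r, x₂). -/
/-!
Let `σ` be the reflection in the perpendicular bisector of `x₁` and `x₂`. It preserves volume,
maps `B(x₂, r)` onto `B(x₁, r)` and fixes `B(x₁, r) ∩ B(x₂, r)`, so the two integrals differ only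
by comparing `p ∘ σ` with `p` on `B(x₂, r) \ B(x₁, r)`. A point `s` there is at least as close to
`x₂` as to `x₁`, and so is `0` because `‖x₂‖ ≤ ‖x₁‖`; reflecting one of two points on the same side
of a hyperplane can only increase their distance, hence `‖s‖ ≤ ‖σ s‖` and `p (σ s) ≤ p s`.
-/

open MeasureTheory

section

variable {α : Type*} [MeasurableSpace α] {μ : Measure α}

theorem setIntegral_le_setIntegral_of_involutive {σ : α → α} (hσ : MeasurePreserving σ μ μ)
    (hσσ : Function.Involutive σ) {f : α → ℝ} (hf : Integrable f μ) {A B : Set α}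
    (hA : MeasurableSet A) (hσA : σ ⁻¹' A = B) (hle : ∀ s ∈ B \ A, f (σ s) ≤ f s) :
    ∫ t in A, f t ∂μ ≤ ∫ t in B, f t ∂μ := by
  have hσe : MeasurableEmbedding σ :=
    (MeasurableEquiv.mk (hσσ.toPerm σ) hσ.measurable hσ.measurable).measurableEmbedding
  have hσB : σ ⁻¹' B = A := hσA ▸ hσσ.preimage A
  have hfσ : Integrable (f ∘ σ) μ := (hσ.integrable_comp_emb hσe).mpr hf
  have hB : MeasurableSet B := hσA ▸ hσ.measurable hA
  have hinter : ∫ t in B ∩ A, f (σ t) ∂μ = ∫ t in B ∩ A, f t ∂μ := by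
    have h := hσ.setIntegral_preimage_emb hσe f (B ∩ A)
    rwa [Set.preimage_inter, hσA, hσB, Set.inter_comm A] at h
  calc ∫ t in A, f t ∂μ = ∫ t in B, f (σ t) ∂μ := by
        rw [← hσ.setIntegral_preimage_emb hσe f A, hσA]
    _ = ∫ t in B ∩ A, f (σ t) ∂μ + ∫ t in B \ A, f (σ t) ∂μ :=
        (integral_inter_add_sdiff hA hfσ.integrableOn).symm
    _ ≤ ∫ t in B ∩ A, f t ∂μ + ∫ t in B \ A, f t ∂μ := by
        rw [hinter]
        exact add_le_add_right
          (setIntegral_mono_on hfσ.integrableOn hf.integrableOn (hB.diff hA) hle) _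
    _ = ∫ t in B, f t ∂μ := integral_inter_add_sdiff hA hf.integrableOn

end

theorem AffineIsometryEquiv.measurePreserving {E : Type*} [NormedAddCommGroup E]
    [InnerProductSpace ℝ E] [FiniteDimensional ℝ E] [MeasurableSpace E] [BorelSpace E]
    (f : E ≃ᵃⁱ[ℝ] E) : MeasurePreserving f := by
  have hf : ⇑f = (· + f 0) ∘ f.linearIsometryEquiv := by
    ext x
    simpa only [vadd_eq_add, add_zero, Function.comp_apply] using f.map_vadd 0 x
  rw [hf]
  exact (measurePreserving_add_right volume (f 0)).comp f.linearIsometryEquiv.measurePreserving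

namespace EuclideanGeometry

open AffineSubspace

variable {E : Type*} [NormedAddCommGroup E] [InnerProductSpace ℝ E] (x₁ x₂ : E)

instance : Nonempty (perpBisector x₁ x₂) :=
  (perpBisector_nonempty (p₁ := x₁) (p₂ := x₂)).to_subtype

instance : (perpBisector x₁ x₂).direction.HasOrthogonalProjection := by
  rw [direction_perpBisector]
  infer_instance

theorem reflection_perpBisector_left : reflection (perpBisector x₁ x₂) x₁ = x₂ := by
  set m := midpoint ℝ x₁ x₂
  have hv : x₁ - m ∈ (perpBisector x₁ x₂).directionᗮ := by
    rw [direction_perpBisector]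
    refine Submodule.le_orthogonal_orthogonal _ (Submodule.mem_span_singleton.mpr ⟨-2⁻¹, ?_⟩)
    simp only [m, midpoint_eq_smul_add, invOf_eq_inv, vsub_eq_sub]
    module
  have h := reflection_orthogonal_vadd (midpoint_mem_perpBisector x₁ x₂) hv
  rw [vadd_eq_add, vadd_eq_add, sub_add_cancel] at h
  rw [h]
  simp only [m, midpoint_eq_smul_add, invOf_eq_inv]
  module

theorem reflection_perpBisector_right : reflection (perpBisector x₁ x₂) x₂ = x₁ := by
  rw [(reflection_involutive _).eq_iff, reflection_perpBisector_left]

theorem preimage_reflection_perpBisector_closedBall (r : ℝ) :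
    reflection (perpBisector x₁ x₂) ⁻¹' Metric.closedBall x₁ r = Metric.closedBall x₂ r := by
  ext t
  rw [Set.mem_preimage, Metric.mem_closedBall, Metric.mem_closedBall, ← dist_reflection,
    reflection_perpBisector_left]

variable {x₁ x₂}

theorem dist_le_dist_reflection_perpBisector {s y : E} (hs : dist s x₂ ≤ dist s x₁)
    (hy : dist y x₂ ≤ dist y x₁) : dist s y ≤ dist s (reflection (perpBisector x₁ x₂) y) := by
  set σ := reflection (perpBisector x₁ x₂)
  obtain ⟨q, hq, hq₀⟩ : ∃ q ∈ segment ℝ s (σ y), dist q x₁ - dist q x₂ = 0 := by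
    refine (convex_segment _ _).isPreconnected.intermediate_value (right_mem_segment ℝ _ _)
      (left_mem_segment ℝ _ _) (by fun_prop) ⟨?_, by linarith⟩
    rw [← dist_reflection, ← dist_reflection, reflection_perpBisector_left,
      reflection_perpBisector_right]
    linarith
  have hqσ : dist q (σ y) = dist q y :=
    dist_reflection_eq_of_mem _ (mem_perpBisector_iff_dist_eq.mpr (sub_eq_zero.mp hq₀)) y
  calc dist s y ≤ dist s q + dist q y := dist_triangle _ _ _
    _ = dist s (σ y) := by rw [← hqσ, dist_add_dist_of_mem_segment hq]

theorem norm_le_norm_reflection_perpBisector {s : E} (hx : ‖x₂‖ ≤ ‖x₁‖)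
    (hs : dist s x₂ ≤ dist s x₁) : ‖s‖ ≤ ‖reflection (perpBisector x₁ x₂) s‖ := by
  rw [← dist_zero_right, ← dist_zero_right, ← dist_reflection]
  exact dist_le_dist_reflection_perpBisector hs (by simpa only [dist_zero_left] using hx)

end EuclideanGeometry

open EuclideanGeometry AffineSubspace

theorem shiftedCDF_antitone_in_norm_general {d : ℕ}
    (p : EuclideanSpace ℝ (Fin d) → ℝ)
    (hint : Integrable p)
    (hdec : ∀ x₁ x₂ : EuclideanSpace ℝ (Fin d), ‖x₁‖ ≤ ‖x₂‖ → p x₂ ≤ p x₁)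
    (r : ℝ) (x₁ x₂ : EuclideanSpace ℝ (Fin d)) (hx : ‖x₂‖ ≤ ‖x₁‖) :
    ∫ t in Metric.closedBall x₁ r, p t ≤ ∫ t in Metric.closedBall x₂ r, p t := by
  refine setIntegral_le_setIntegral_of_involutive
    (reflection (perpBisector x₁ x₂)).measurePreserving (reflection_involutive _) hint Metric.isClosed_closedBall.measurableSet
    (preimage_reflection_perpBisector_closedBall x₁ x₂ r) fun s ⟨hs₂, hs₁⟩ ↦ hdec _ _ ?_
  rw [Metric.mem_closedBall] at hs₂ hs₁
  exact norm_le_norm_reflection_perpBisector hx (by linarith [not_le.mp hs₁])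

/-- For a nice density `p` (spherically symmetric and nonincreasing in argument norm),
the shifted CDF `Φ(r, x) = ∫_{B(x,r)} p` is nonincreasing in `‖x‖`. -/
theorem shiftedCDF_antitone_in_norm {d : ℕ}
    (p : EuclideanSpace ℝ (Fin d) → ℝ)
    (hint : Integrable p) (hnonneg : ∀ x, 0 ≤ p x)
    (hprob : ∫ x, p x = 1)
    (hsym : ∀ x₁ x₂ : EuclideanSpace ℝ (Fin d), ‖x₁‖ = ‖x₂‖ → p x₁ = p x₂)
    (hdec : ∀ x₁ x₂ : EuclideanSpace ℝ (Fin d), ‖x₁‖ ≤ ‖x₂‖ → p x₂ ≤ p x₁)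
    (r : ℝ) (x₁ x₂ : EuclideanSpace ℝ (Fin d)) (hx : ‖x₂‖ ≤ ‖x₁‖) :
    ∫ t in Metric.closedBall x₁ r, p t ≤ ∫ t in Metric.closedBall x₂ r, p t :=
  shiftedCDF_antitone_in_norm_general p hint hdec r x₁ x₂ hx
end

section
/- Let h : ℝ^d → [0,1] with h ≥ τ + 1/2 on a set I_τ containing a ball B(x̂, ω) with ω ≥ r_α, where r_α = sqrt(Ψ_α⁻¹(0.5/(0.5+τ))) and Ψ_α is the CDF of ‖z‖₂² for z ∼ p_α. Then for every x with B(x, r_α) ⊆ I_τ, one has (h * p_α)(x) ≥ 1/2. In particular, every point of the shrunk ball B(x̂, ω − r_α) satisfies (h * p_α)(x) ≥ 1/2. -/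
open MeasureTheory

/-- If `h ≥ τ + 1/2` on `I_τ ⊇ B(xhat, ω)` with `ω ≥ r_α`, where `r_α` satisfies
`Ψ_α(r_α²) = 0.5/(0.5+τ)` (i.e., `r_α = sqrt(Ψ_α⁻¹(0.5/(0.5+τ)))` for the CDF `Ψ_α`
of `‖z‖²`, `z ∼ pα`), then `(h * pα)(x) ≥ 1/2` for every `x` with `B(x, r_α) ⊆ I_τ`;
in particular this holds for every point of the shrunk ball `B(xhat, ω − r_α)`. -/
theorem conv_ge_half_on_shrunk_ball {d : ℕ}
    (pα h : EuclideanSpace ℝ (Fin d) → ℝ)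
    (Iτ : Set (EuclideanSpace ℝ (Fin d))) (τ ω rα : ℝ)
    (xhat : EuclideanSpace ℝ (Fin d))
    (hpα_nonneg : ∀ v, 0 ≤ pα v) (hh_nonneg : ∀ x, 0 ≤ h x)
    (hτ : 0 ≤ τ)
    (hhI : ∀ x ∈ Iτ, τ + 1/2 ≤ h x)
    (hrα : 0 ≤ rα) (hωrα : rα ≤ ω)
    (hΨ : ∫ δ in {δ : EuclideanSpace ℝ (Fin d) | ‖δ‖ ^ 2 ≤ rα ^ 2}, pα δ =
      (1/2) / (1/2 + τ))
    (hball : Metric.closedBall xhat ω ⊆ Iτ)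
    (hint : ∀ x, Integrable (fun δ => h (x - δ) * pα δ)) :
    (∀ x : EuclideanSpace ℝ (Fin d), Metric.closedBall x rα ⊆ Iτ →
      (1:ℝ)/2 ≤ ∫ δ, h (x - δ) * pα δ) ∧
    (∀ x ∈ Metric.closedBall xhat (ω - rα), (1:ℝ)/2 ≤ ∫ δ, h (x - δ) * pα δ) := by
  set S : Set (EuclideanSpace ℝ (Fin d)) := {δ | ‖δ‖ ^ 2 ≤ rα ^ 2} with hS
  have hSmeas : MeasurableSet S := by
    apply measurableSet_le _ measurable_const
    exact (measurable_norm.pow_const 2)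
  have hpos : (0:ℝ) < 1/2 + τ := by linarith
  have hpαS : IntegrableOn pα S := by
    by_contra hni
    rw [MeasureTheory.integral_undef hni] at hΨ
    have : (0:ℝ) < (1/2) / (1/2 + τ) := by positivity
    linarith [hΨ.symm ▸ this]
  have main : ∀ x : EuclideanSpace ℝ (Fin d), Metric.closedBall x rα ⊆ Iτ →
      (1:ℝ)/2 ≤ ∫ δ, h (x - δ) * pα δ := by
    intro x hx
    have hmem : ∀ δ ∈ S, x - δ ∈ Iτ := by
      intro δ hδ
      apply hx
      simp only [Metric.mem_closedBall, dist_eq_norm]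
      have : ‖δ‖ ≤ rα := by
        have := hδ
        simp only [hS, Set.mem_setOf_eq] at this
        nlinarith [norm_nonneg δ]
      simpa using this
    have h1 : (τ + 1/2) * ((1/2) / (1/2 + τ)) ≤ ∫ δ in S, h (x - δ) * pα δ := by
      rw [← hΨ, ← MeasureTheory.integral_const_mul]
      apply MeasureTheory.setIntegral_mono_on
      · exact hpαS.const_mul _
      · exact (hint x).integrableOn
      · exact hSmeas
      · intro δ hδ
        exact mul_le_mul_of_nonneg_right (hhI _ (hmem δ hδ)) (hpα_nonneg δ)
    have h2 : ∫ δ in S, h (x - δ) * pα δ ≤ ∫ δ, h (x - δ) * pα δ := by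
      apply MeasureTheory.setIntegral_le_integral (hint x)
      filter_upwards with δ
      exact mul_nonneg (hh_nonneg _) (hpα_nonneg δ)
    have heq : (τ + 1/2) * ((1/2) / (1/2 + τ)) = 1/2 := by
      field_simp
      ring
    linarith
  refine ⟨main, fun x hx => main x ?_⟩
  refine (Metric.closedBall_subset_closedBall' ?_).trans hball
  simp only [Metric.mem_closedBall] at hx
  linarith
end
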